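/- Let Λ_1, Λ_2 ⊂ ℝ^d be almost-orthogonal planes and let v be a vector whose angle with each of Λ_1 and Λ_2 is at most α, for some 0 < α ≤ 1/3. Then the angle between v and Λ_1 ∩ Λ_2 is at most 10α. -/

import Mathlib

open scoped BigOperators RealInnerProductSpace
open Filter

noncomputable section

abbrev Pt (d : ℕ) := EuclideanSpace ℝ (Fin d)

def Separated {d : ℕ} (S : Finset (Pt d)) : Prop :=
  ∀ p ∈ S, ∀ q ∈ S, p ≠ q → 1 ≤ dist p q

def IsKDistSet {d : ℕ} (k : ℕ) (S : Finset (Pt d)) : Prop :=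
  ∃ D : Finset ℝ, D.card ≤ k ∧ ∀ p ∈ S, ∀ q ∈ S, p ≠ q → dist p q ∈ D

def mDist (k d : ℕ) : ℕ :=
  sSup {n : ℕ | ∃ S : Finset (Pt d), S.card = n ∧ IsKDistSet k S}

def IsNearlyKDist {d : ℕ} (k : ℕ) (ε : ℝ) (S : Finset (Pt d)) : Prop :=
  Separated S ∧ ∃ t : ℕ → ℝ, (∀ i < k, 1 ≤ t i) ∧
    ∀ p ∈ S, ∀ q ∈ S, p ≠ q → ∃ i < k, dist p q ∈ Set.Icc (t i) (t i + ε)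

def Mnear (k d : ℕ) : ℕ :=
  sSup {M : ℕ | ∀ ε : ℝ, 0 < ε → ∃ S : Finset (Pt d), S.card = M ∧ IsNearlyKDist k ε S}

def vsAngle {d : ℕ} (v : Pt d) (Λ : Submodule ℝ (Pt d)) : ℝ :=
  sInf {θ : ℝ | ∃ w ∈ Λ, w ≠ 0 ∧ θ = InnerProductGeometry.angle v w}

def IsFlatAt {d : ℕ} (S : Finset (Pt d)) (p : Pt d) (j : ℕ) (α : ℝ) : Prop :=
  ∃ Λ : Submodule ℝ (Pt d), Module.finrank ℝ Λ = j ∧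
    ∀ q ∈ S, q ≠ p → vsAngle (p - q) Λ ≤ α

def Nflat (k d' d : ℕ) : ℕ :=
  sSup {N : ℕ | ∀ ε α : ℝ, 0 < ε → 0 < α →
    ∃ S : Finset (Pt d'), S.card = N ∧ IsNearlyKDist k ε S ∧ ∀ p ∈ S, IsFlatAt S p d α}

def turanNum (n s : ℕ) : ℕ :=
  n.choose 2 - ((n % s) * (n / s + 1).choose 2 + (s - n % s) * (n / s).choose 2)

open Classical in
def nearPairs {d : ℕ} (S : Finset (Pt d)) (k : ℕ) (ε : ℝ) (t : ℕ → ℝ) :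
    Finset (Pt d × Pt d) :=
  S.offDiag.filter (fun pq => ∃ i < k, dist pq.1 pq.2 ∈ Set.Icc (t i) (t i + ε))

def Mkdn (k d n : ℕ) : ℕ :=
  sSup {M : ℕ | ∃ (S : Finset (Pt d)) (t : ℕ → ℝ), S.card = n ∧ Separated S ∧
    (∀ i < k, 1 ≤ t i) ∧ (nearPairs S k 1 t).card = 2 * M}


def AlmostOrthogonal {d : ℕ} (Λ₁ Λ₂ : Submodule ℝ (Pt d)) : Prop :=
  ∃ (v : Fin d → Pt d) (a b c : ℕ), a ≤ b ∧ b ≤ c ∧ c ≤ d ∧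
    (LinearIndependent ℝ v ∧ Submodule.span ℝ (Set.range v) = ⊤) ∧
    (∀ i j : Fin d, i.val < b → j.val < b →
      (inner ℝ (v i) (v j) : ℝ) = (if i = j then (1 : ℝ) else 0)) ∧
    Submodule.span ℝ {x | ∃ i : Fin d, i.val < b ∧ x = v i} = Λ₁ ∧
    (∀ i j : Fin d, a ≤ i.val → i.val < c → a ≤ j.val → j.val < c →
      (inner ℝ (v i) (v j) : ℝ) = (if i = j then (1 : ℝ) else 0)) ∧
    Submodule.span ℝ {x | ∃ i : Fin d, a ≤ i.val ∧ i.val < c ∧ x = v i} = Λ₂ ∧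
    (∀ w ∈ Submodule.span ℝ {x | ∃ i : Fin d, i.val < a ∧ x = v i}, w ≠ 0 →
      vsAngle w Λ₂ ∈ Set.Icc (Real.pi / 2 - 0.01) (Real.pi / 2 + 0.01)) ∧
    (∀ w ∈ Submodule.span ℝ {x | ∃ i : Fin d, b ≤ i.val ∧ x = v i}, w ≠ 0 →
      vsAngle w Λ₁ ∈ Set.Icc (Real.pi / 2 - 0.01) (Real.pi / 2 + 0.01))


/-! The vectors `v_{a+1}, …, v_b` span a subspace `B ≤ Λ₁ ⊓ Λ₂`, and `Λ₂ ≤ B ⊔ C` for the span `C`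
of `v_{b+1}, …, v_c`, which is orthogonal to `B` and almost orthogonal to `Λ₁`. The projections
`x`, `y` of `v` onto `Λ₁`, `Λ₂` are within `sin α ‖v‖` of `v`. Their components orthogonal to `B`
lie in `Λ₁` and in `C` respectively and are within `2 sin α ‖v‖` of each other; almost
orthogonality then forces both to be short. Hence the projection of `v` onto `B` is within
`3 sin α ‖v‖` of `v`, and its angle with `v` is at most `10 α`. -/

open InnerProductGeometry Real

section InnerProductSpace

variable {E : Type*} [NormedAddCommGroup E] [InnerProductSpace ℝ E]

lemma one_sub_mul_sq_norm_le_sq_norm_sub {a b : E} {ε : ℝ} (hε₀ : 0 ≤ ε) (hε : ε ≤ 1)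
    (h : |⟪a, b⟫| ≤ ε * (‖a‖ * ‖b‖)) :
    (1 - ε) * ‖a‖ ^ 2 ≤ ‖a - b‖ ^ 2 := by
  rw [norm_sub_sq_real]
  nlinarith [le_abs_self ⟪a, b⟫, mul_nonneg hε₀ (sq_nonneg (‖a‖ - ‖b‖)),
    mul_nonneg (sub_nonneg.mpr hε) (sq_nonneg ‖b‖)]

namespace Submodule

section

variable (K : Submodule ℝ E) [K.HasOrthogonalProjection]

lemma inner_starProjection_sub_self (v : E) :
    ⟪K.starProjection v, v - K.starProjection v⟫ = 0 := by
  rw [real_inner_comm]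
  exact K.starProjection_inner_eq_zero v _ (K.starProjection_apply_mem v)

lemma angle_starProjection_le_pi_div_two (v : E) : angle v (K.starProjection v) ≤ π / 2 := by
  simpa [angle_comm] using
    angle_add_le_pi_div_two_of_inner_eq_zero (K.inner_starProjection_sub_self v)

lemma sin_angle_starProjection_mul_norm (v : E) :
    sin (angle v (K.starProjection v)) * ‖v‖ = ‖v - K.starProjection v‖ := by
  simpa [angle_comm] using
    sin_angle_add_mul_norm_of_inner_eq_zero (K.inner_starProjection_sub_self v)

lemma angle_starProjection_le_angle (v : E) {w : E} (hw : w ∈ K) :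
    angle v (K.starProjection v) ≤ angle v w := by
  have hangle : angle v (K.starProjection v) = arccos (‖K.starProjection v‖ / ‖v‖) := by
    simpa [angle_comm] using
      angle_add_eq_arccos_of_inner_eq_zero (K.inner_starProjection_sub_self v)
  have hinner : ⟪v, w⟫ = ⟪K.starProjection v, w⟫ := by
    have := K.starProjection_inner_eq_zero v w hw
    rwa [inner_sub_left, sub_eq_zero] at this
  rw [hangle, angle]
  apply arccos_le_arccos
  rcases eq_or_ne w 0 with rfl | hw0
  · simp only [inner_zero_right, zero_div]
    positivity
  calc ⟪v, w⟫ / (‖v‖ * ‖w‖) ≤ ‖K.starProjection v‖ * ‖w‖ / (‖v‖ * ‖w‖) := by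
        rw [hinner]; gcongr; exact real_inner_le_norm _ _
    _ = ‖K.starProjection v‖ / ‖v‖ := mul_div_mul_right _ _ (norm_ne_zero_iff.mpr hw0)

end

lemma norm_sub_starProjection_le_of_almostOrthogonal {Λ₁ Λ₂ B C : Submodule ℝ E}
    [Λ₁.HasOrthogonalProjection] [Λ₂.HasOrthogonalProjection] [B.HasOrthogonalProjection]
    (hB : B ≤ Λ₁) (hBC : B ⟂ C) (hΛ₂ : Λ₂ ≤ B ⊔ C) {ε : ℝ} (hε₀ : 0 ≤ ε) (hε : ε ≤ 1 / 2)
    (hC : ∀ c ∈ C, ∀ l ∈ Λ₁, |⟪c, l⟫| ≤ ε * (‖c‖ * ‖l‖)) {v : E} {δ : ℝ}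
    (h₁ : ‖v - Λ₁.starProjection v‖ ≤ δ) (h₂ : ‖v - Λ₂.starProjection v‖ ≤ δ) :
    ‖v - B.starProjection v‖ ≤ 3 * δ := by
  set x := Λ₁.starProjection v
  set y := Λ₂.starProjection v
  have hQx : Bᗮ.starProjection x ∈ Λ₁ := by
    rw [starProjection_orthogonal_val]
    exact Λ₁.sub_mem (Λ₁.starProjection_apply_mem v) (hB (B.starProjection_apply_mem x))
  have hQy : Bᗮ.starProjection y ∈ C := by
    obtain ⟨b, hb, c, hc, hbc⟩ := mem_sup.mp (hΛ₂ (Λ₂.starProjection_apply_mem v))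
    rwa [show y = b + c from hbc.symm, map_add, starProjection_orthogonal_apply_eq_zero hb,
      zero_add, starProjection_eq_self_iff.mpr (hBC.ge hc)]
  have hxy : ‖Bᗮ.starProjection x - Bᗮ.starProjection y‖ ≤ 2 * δ :=
    calc ‖Bᗮ.starProjection x - Bᗮ.starProjection y‖ ≤ ‖x - y‖ := by
          rw [← map_sub]; exact norm_starProjection_apply_le _ _
      _ ≤ ‖x - v‖ + ‖v - y‖ := norm_sub_le_norm_sub_add_norm_sub _ _ _
      _ ≤ 2 * δ := by rw [norm_sub_rev]; linarith
  have hQx_sq : ‖Bᗮ.starProjection x‖ ^ 2 ≤ 8 * δ ^ 2 := by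
    have h := one_sub_mul_sq_norm_le_sq_norm_sub (a := Bᗮ.starProjection x)
      (b := Bᗮ.starProjection y) hε₀ (by linarith) <| by
        rw [real_inner_comm, mul_comm ‖_‖]; exact hC _ hQy _ hQx
    nlinarith [norm_nonneg (Bᗮ.starProjection x - Bᗮ.starProjection y)]
  have hPB : B.starProjection x = B.starProjection v :=
    DFunLike.congr_fun (starProjection_comp_starProjection_of_le hB) v
  have hsplit : v - B.starProjection v = (v - x) + Bᗮ.starProjection x := by
    rw [starProjection_orthogonal_val, hPB]; abel
  have hpyth := norm_add_sq_eq_norm_sq_add_norm_sq_real (Λ₁.starProjection_inner_eq_zero v _ hQx)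
  rw [← hsplit] at hpyth
  have hδ : 0 ≤ δ := (norm_nonneg _).trans h₁
  refine le_of_pow_le_pow_left₀ two_ne_zero (by positivity) ?_
  nlinarith [norm_nonneg (v - x)]

end Submodule

end InnerProductSpace

lemma three_mul_sin_le_sin_ten_mul {x : ℝ} (hx₀ : 0 ≤ x) (hx : 10 * x ≤ π / 2) :
    3 * sin x ≤ sin (10 * x) :=
  calc 3 * sin x ≤ 3 * x := by gcongr; exact sin_le hx₀
    _ ≤ 2 / π * (10 * x) := by
        rw [div_mul_eq_mul_div, le_div_iff₀ pi_pos]; nlinarith [pi_lt_four]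
    _ ≤ sin (10 * x) := mul_le_sin (by positivity) hx

section VsAngle

variable {d : ℕ}

lemma vsAngle_nonneg (v : Pt d) (Λ : Submodule ℝ (Pt d)) : 0 ≤ vsAngle v Λ :=
  Real.sInf_nonneg (by rintro _ ⟨w, -, -, rfl⟩; exact angle_nonneg v w)

lemma vsAngle_le_angle {v w : Pt d} {Λ : Submodule ℝ (Pt d)} (hw : w ∈ Λ) (hw0 : w ≠ 0) :
    vsAngle v Λ ≤ angle v w :=
  csInf_le ⟨0, by rintro _ ⟨u, -, -, rfl⟩; exact angle_nonneg v u⟩ ⟨w, hw, hw0, rfl⟩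

lemma vsAngle_bot (v : Pt d) : vsAngle v ⊥ = 0 := by
  simp [vsAngle]

lemma vsAngle_le_pi_div_two (v : Pt d) (Λ : Submodule ℝ (Pt d)) : vsAngle v Λ ≤ π / 2 := by
  rcases eq_or_ne Λ ⊥ with rfl | hΛ
  · rw [vsAngle_bot]; positivity
  obtain ⟨w, hw, hw0⟩ := Λ.ne_bot_iff.mp hΛ
  have h₁ := vsAngle_le_angle (v := v) hw hw0
  have h₂ := vsAngle_le_angle (v := v) (Λ.neg_mem hw) (neg_ne_zero.mpr hw0)
  rw [angle_neg_right] at h₂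
  linarith

lemma angle_starProjection_le_vsAngle (v : Pt d) {Λ : Submodule ℝ (Pt d)} (hΛ : Λ ≠ ⊥) :
    angle v (Λ.starProjection v) ≤ vsAngle v Λ := by
  obtain ⟨w, hw, hw0⟩ := Λ.ne_bot_iff.mp hΛ
  refine le_csInf ⟨_, w, hw, hw0, rfl⟩ ?_
  rintro _ ⟨u, hu, -, rfl⟩
  exact Λ.angle_starProjection_le_angle v hu

lemma norm_sub_starProjection_le_sin_mul {Λ : Submodule ℝ (Pt d)} (hΛ : Λ ≠ ⊥) {v : Pt d}
    {α : ℝ} (h : vsAngle v Λ ≤ α) (hα : α ≤ π / 2) :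
    ‖v - Λ.starProjection v‖ ≤ sin α * ‖v‖ := by
  rw [← Λ.sin_angle_starProjection_mul_norm]
  gcongr
  exact sin_le_sin_of_le_of_le_pi_div_two
    (by linarith [pi_pos, angle_nonneg v (Λ.starProjection v)]) hα
    ((angle_starProjection_le_vsAngle v hΛ).trans h)

lemma vsAngle_le_of_norm_sub_starProjection_le {B Λ : Submodule ℝ (Pt d)} (hB : B ≤ Λ)
    {v : Pt d} (hv : v ≠ 0) {θ : ℝ} (hθ₀ : 0 ≤ θ) (hθ : θ < π / 2)
    (h : ‖v - B.starProjection v‖ ≤ sin θ * ‖v‖) : vsAngle v Λ ≤ θ := by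
  rw [← B.sin_angle_starProjection_mul_norm] at h
  have hangle : angle v (B.starProjection v) ≤ θ :=
    (strictMonoOn_sin.le_iff_le
      ⟨by linarith [pi_pos, angle_nonneg v (B.starProjection v)],
        B.angle_starProjection_le_pi_div_two v⟩
      ⟨by linarith [pi_pos], hθ.le⟩).mp (le_of_mul_le_mul_right h (norm_pos_iff.mpr hv))
  have hw0 : B.starProjection v ≠ 0 := by
    intro hw
    rw [hw, angle_zero_right] at hangle
    linarith
  exact (vsAngle_le_angle (hB (B.starProjection_apply_mem v)) hw0).trans hangle

lemma abs_inner_le_sin_mul_of_pi_div_two_sub_le_vsAngle {C Λ : Submodule ℝ (Pt d)} {η : ℝ}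
    (hη : η ≤ π / 2) (h : ∀ c ∈ C, c ≠ 0 → π / 2 - η ≤ vsAngle c Λ) {c l : Pt d} (hc : c ∈ C)
    (hl : l ∈ Λ) : |⟪c, l⟫| ≤ sin η * (‖c‖ * ‖l‖) := by
  rcases eq_or_ne c 0 with rfl | hc0
  · simp
  have hinner : ∀ l ∈ Λ, ⟪c, l⟫ ≤ sin η * (‖c‖ * ‖l‖) := by
    intro l hl
    rcases eq_or_ne l 0 with rfl | hl0
    · simp
    have hangle : π / 2 - η ≤ angle c l := (h c hc hc0).trans (vsAngle_le_angle hl hl0)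
    have hcos := cos_le_cos_of_nonneg_of_le_pi (by linarith) (angle_le_pi c l) hangle
    rwa [cos_pi_div_two_sub, cos_angle, div_le_iff₀ (by positivity)] at hcos
  have hneg := hinner (-l) (Λ.neg_mem hl)
  rw [inner_neg_right, norm_neg] at hneg
  exact abs_le.mpr ⟨by linarith, hinner l hl⟩

open Submodule in
lemma AlmostOrthogonal.exists_isOrtho_decomposition {Λ₁ Λ₂ : Submodule ℝ (Pt d)}
    (h : AlmostOrthogonal Λ₁ Λ₂) :
    ∃ B C : Submodule ℝ (Pt d), B ≤ Λ₁ ⊓ Λ₂ ∧ B ⟂ C ∧ Λ₂ ≤ B ⊔ C ∧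
      ∀ c ∈ C, ∀ l ∈ Λ₁, |⟪c, l⟫| ≤ 1 / 100 * (‖c‖ * ‖l‖) := by
  obtain ⟨u, a, b, c, hab, hbc, -, -, -, hΛ₁, horth₂, hΛ₂, -, hperp₁⟩ := h
  refine ⟨span ℝ {x | ∃ i : Fin d, a ≤ i.val ∧ i.val < b ∧ x = u i},
    span ℝ {x | ∃ i : Fin d, b ≤ i.val ∧ i.val < c ∧ x = u i}, ?_, ?_, ?_, ?_⟩
  · rw [← hΛ₁, ← hΛ₂, le_inf_iff]
    constructor <;> apply span_mono
    · rintro _ ⟨i, -, hi, rfl⟩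
      exact ⟨i, hi, rfl⟩
    · rintro _ ⟨i, hai, hi, rfl⟩
      exact ⟨i, hai, hi.trans_le hbc, rfl⟩
  · rw [isOrtho_span]
    rintro _ ⟨i, hai, hib, rfl⟩ _ ⟨j, hbj, hjc, rfl⟩
    rw [horth₂ i j hai (hib.trans_le hbc) (hab.trans hbj) hjc, if_neg]
    rintro rfl
    omega
  · rw [← hΛ₂, span_le]
    rintro _ ⟨i, hai, hic, rfl⟩
    rcases lt_or_ge i.val b with hib | hbi
    · exact mem_sup_left (subset_span ⟨i, hai, hib, rfl⟩)
    · exact mem_sup_right (subset_span ⟨i, hbi, hic, rfl⟩)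
  · intro x hx l hl
    have hspan : span ℝ {x | ∃ i : Fin d, b ≤ i.val ∧ i.val < c ∧ x = u i} ≤
        span ℝ {x | ∃ i : Fin d, b ≤ i.val ∧ x = u i} :=
      span_mono fun _ ⟨i, hbi, _, he⟩ => ⟨i, hbi, he⟩
    refine (abs_inner_le_sin_mul_of_pi_div_two_sub_le_vsAngle (by linarith [pi_gt_three])
      (fun w hw hw0 => (hperp₁ w (hspan hw) hw0).1) hx hl).trans ?_
    gcongr
    exact (sin_le (by norm_num)).trans (by norm_num)

end VsAngle

theorem stmt11_general (d : ℕ) (Λ₁ Λ₂ : Submodule ℝ (Pt d))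
    (hao : AlmostOrthogonal Λ₁ Λ₂) (v : Pt d) (α : ℝ)
    (h₁ : vsAngle v Λ₁ ≤ α) (h₂ : vsAngle v Λ₂ ≤ α) :
    vsAngle v (Λ₁ ⊓ Λ₂) ≤ 10 * α := by
  have hα : 0 ≤ α := (vsAngle_nonneg v Λ₁).trans h₁
  rcases le_or_gt (π / 2) (10 * α) with hlarge | hsmall
  · exact (vsAngle_le_pi_div_two v _).trans hlarge
  rcases eq_or_ne (Λ₁ ⊓ Λ₂) ⊥ with hbot | hne
  · rw [hbot, vsAngle_bot]
    positivity
  have hΛ₁ : Λ₁ ≠ ⊥ := ne_bot_of_le_ne_bot hne inf_le_left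
  have hΛ₂ : Λ₂ ≠ ⊥ := ne_bot_of_le_ne_bot hne inf_le_right
  have hv : v ≠ 0 := by
    rintro rfl
    have := (angle_starProjection_le_vsAngle 0 hΛ₁).trans h₁
    rw [angle_zero_left] at this
    linarith
  have hα' : α ≤ π / 2 := by linarith
  obtain ⟨B, C, hB, hBC, hΛ₂BC, hC⟩ := hao.exists_isOrtho_decomposition
  have hclose := Submodule.norm_sub_starProjection_le_of_almostOrthogonal
    (hB.trans inf_le_left) hBC hΛ₂BC (by norm_num) (by norm_num) hC
    (norm_sub_starProjection_le_sin_mul hΛ₁ h₁ hα') (norm_sub_starProjection_le_sin_mul hΛ₂ h₂ hα')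
  refine vsAngle_le_of_norm_sub_starProjection_le hB hv (by positivity) hsmall (hclose.trans ?_)
  rw [← mul_assoc]
  gcongr
  exact three_mul_sin_le_sin_ten_mul hα hsmall.le

theorem stmt11 (d : ℕ) (Λ₁ Λ₂ : Submodule ℝ (Pt d))
    (hao : AlmostOrthogonal Λ₁ Λ₂) (v : Pt d) (α : ℝ)
    (hα : 0 < α) (hα' : α ≤ 1 / 3)
    (h₁ : vsAngle v Λ₁ ≤ α) (h₂ : vsAngle v Λ₂ ≤ α) :
    vsAngle v (Λ₁ ⊓ Λ₂) ≤ 10 * α :=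
  stmt11_general d Λ₁ Λ₂ hao v α h₁ h₂

end
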